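/- arXiv:1303.0572 — 2 statements merged into one kernel-verified Lean document; each statement's English description precedes it below -/
import Mathlib

section
/- (Properties of the rate function r) Assume sigma^2(0) > 0. Then: (i) delta(0) = 0 and lambda -> delta(lambda) is strictly increasing on [0, infinity); (ii) for every lambda >= 0, r( delta(lambda) ) = lambda ( H(X|Y) + delta(lambda) ) - ln sum_{x,y} p(y) p(x|y)^{1-lambda}; (iii) setting Delta* = lim_{lambda -> infinity} delta(lambda), the function r is convex and strictly increasing on (0, Delta*), and is differentiable there with derivative r'( delta(lambda) ) = lambda for every lambda > 0 with delta(lambda) < Delta*. -/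
open scoped Classical BigOperators
open Finset

noncomputable section

/-- The Gaussian tail function `Q(s) = (1/sqrt(2*pi)) * int_s^infty e^{-x^2/2} dx`. -/
def gaussQ (s : ℝ) : ℝ :=
  (1 / Real.sqrt (2 * Real.pi)) * ∫ x in Set.Ioi s, Real.exp (-x ^ 2 / 2)

/-- The inverse of the Gaussian tail function (on `(0,1)`). -/
def gaussQinv : ℝ → ℝ := Function.invFun gaussQ

/-- A joint pmf on finite alphabets `X` and `Y`, with all probabilities positive. -/
structure JointPMF (X Y : Type) [Fintype X] [Fintype Y] where
  p : X → Y → ℝ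
  p_pos : ∀ x y, 0 < p x y
  p_sum : ∑ x, ∑ y, p x y = 1

namespace JointPMF

variable {X Y : Type} [Fintype X] [Fintype Y] (P : JointPMF X Y)

/-- Marginal `p(y)`. -/
def pY (y : Y) : ℝ := ∑ x, P.p x y

/-- Conditional pmf `p(x|y)`. -/
def pXY (x : X) (y : Y) : ℝ := P.p x y / P.pY y

/-- Conditional entropy `H(X|Y)` (in nats). -/
def condEnt : ℝ := ∑ x, ∑ y, P.p x y * (-Real.log (P.pXY x y))

/-- `Pr{ -(1/n) sum_i ln p(X_i|Y_i) > H(X|Y) + δ }` for `n` i.i.d. copies of `(X,Y)`. -/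
def tailProb (n : ℕ) (δ : ℝ) : ℝ :=
  ∑ xv : Fin n → X, ∑ yv : Fin n → Y,
    (∏ i, P.p (xv i) (yv i)) *
      (if P.condEnt + δ < -(1 / (n : ℝ)) * ∑ i, Real.log (P.pXY (xv i) (yv i))
        then 1 else 0)

/-- `ln sum_{x,y} p(y) p(x|y)^{1-λ}`. -/
def tiltLogSum (lam : ℝ) : ℝ :=
  Real.log (∑ x, ∑ y, P.pY y * P.pXY x y ^ (1 - lam))

/-- The rate function `r(δ)`. -/
def rFun (δ : ℝ) : ℝ :=
  sSup ((fun lam => lam * (P.condEnt + δ) - P.tiltLogSum lam) '' Set.Ici 0)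

/-- The tilting factor `f_λ(x,y)`. -/
def fLam (lam : ℝ) (x : X) (y : Y) : ℝ :=
  P.pXY x y ^ (-lam) / ∑ u, ∑ v, P.pY v * P.pXY u v ^ (1 - lam)

/-- `δ(λ)`. -/
def deltaLam (lam : ℝ) : ℝ :=
  (∑ x, ∑ y, P.p x y * (P.fLam lam x y * (-Real.log (P.pXY x y)))) - P.condEnt

/-- `σ²(λ)`. -/
def sigmaSq (lam : ℝ) : ℝ :=
  ∑ x, ∑ y,
    P.fLam lam x y * (P.pY y * (P.pXY x y *
      |(-Real.log (P.pXY x y)) - (P.condEnt + P.deltaLam lam)| ^ 2))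

/-- `M(λ)`. -/
def Mthird (lam : ℝ) : ℝ :=
  ∑ x, ∑ y,
    P.fLam lam x y * (P.pY y * (P.pXY x y *
      |(-Real.log (P.pXY x y)) - (P.condEnt + P.deltaLam lam)| ^ 3))

/-- `σ² = sum_{x,y} p(x,y) (-ln p(x|y) - H(X|Y))²`. -/
def sigma0 : ℝ :=
  ∑ x, ∑ y, P.p x y * ((-Real.log (P.pXY x y)) - P.condEnt) ^ 2

/-- `M = sum_{x,y} p(x,y) |-ln p(x|y) - H(X|Y)|³`. -/
def M0 : ℝ :=
  ∑ x, ∑ y, P.p x y * |(-Real.log (P.pXY x y)) - P.condEnt| ^ 3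

/-- `ξ̄(λ,n)` with the Berry-Esseen constant `C = 0.4784`. -/
def xiBar (lam : ℝ) (n : ℕ) : ℝ :=
  2 * 0.4784 * P.Mthird lam / (Real.sqrt n * Real.sqrt (P.sigmaSq lam) ^ 3) +
    Real.exp ((n : ℝ) * lam ^ 2 * P.sigmaSq lam / 2) *
      (gaussQ (Real.sqrt n * lam * Real.sqrt (P.sigmaSq lam)) -
        gaussQ
          (gaussQinv
              (0.4784 * P.Mthird lam /
                (Real.sqrt n * Real.sqrt (P.sigmaSq lam) ^ 3)) +
            Real.sqrt n * lam * Real.sqrt (P.sigmaSq lam)))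

/-- `ξ̲(λ,n)` with the Berry-Esseen constant `C = 0.4784`. -/
def xiUnder (lam : ℝ) (n : ℕ) : ℝ :=
  Real.exp ((n : ℝ) * lam ^ 2 * P.sigmaSq lam / 2) *
    gaussQ
      (gaussQinv
          (1 / 2 - 2 * 0.4784 * P.Mthird lam /
            (Real.sqrt n * Real.sqrt (P.sigmaSq lam) ^ 3)) +
        Real.sqrt n * lam * Real.sqrt (P.sigmaSq lam))

end JointPMF

/-!
Write `Z = -ln p(X|Y)`. Then `Λ(λ) = ln E e^{λZ}` is the cumulant generating function of `Z`,
with `Λ' = H(X|Y) + δ` and `Λ'' = δ' = σ²`; and `σ²(λ)`, the variance of `Z` under the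
`λ`-tilted law, is positive for all `λ` as soon as `Z` is not constant, i.e. as soon as
`σ²(0) > 0`. Since `Λ` is convex, the concave function `λ ↦ λ (H + δ(λ₀)) - Λ(λ)` is maximal
at its critical point `λ₀`, which is (ii). Thus `r ∘ δ = λ Λ' - Λ`, whose derivative is
`λ σ² = λ δ'`, so the inverse function theorem gives `r'(δ(λ)) = λ`; `r` is then strictly
increasing and convex because its derivative is positive and increasing.
-/

open Filter Topology

theorem add_deriv_mul_sub_le_of_monotone {f f' : ℝ → ℝ} (hf : ∀ t, HasDerivAt f (f' t) t)
    (hf' : Monotone f') (x y : ℝ) : f x + f' x * (y - x) ≤ f y := by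
  set g : ℝ → ℝ := fun t => f t - f' x * t
  have hg : ∀ t, HasDerivAt g (f' t - f' x) t := fun t =>
    (hf t).sub ((hasDerivAt_id t).const_mul (f' x) |>.congr_deriv (mul_one _))
  have hconvex : ConvexOn ℝ Set.univ g := by
    refine MonotoneOn.convexOn_of_deriv convex_univ
      (fun t _ => (hg t).continuousAt.continuousWithinAt)
      (fun t _ => (hg t).differentiableAt.differentiableWithinAt) ?_
    intro s _ t _ hst
    rw [(hg s).deriv, (hg t).deriv]
    exact sub_le_sub_right (hf' hst) _
  have hmin : IsMinOn g Set.univ x :=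
    hconvex.isMinOn_of_rightDeriv_eq_zero (by simp)
      (((hg x).hasDerivWithinAt.derivWithin (uniqueDiffWithinAt_Ioi x)).trans (sub_self _))
  have := isMinOn_iff.mp hmin y (Set.mem_univ y)
  simp only [g] at this
  linarith

namespace JointPMF

variable {X Y : Type} [Fintype X] [Fintype Y] (P : JointPMF X Y)

lemma nonempty_left (P : JointPMF X Y) : Nonempty X := by
  by_contra h
  rw [not_nonempty_iff] at h
  simpa using P.p_sum

lemma nonempty_right (P : JointPMF X Y) : Nonempty Y := by
  by_contra h
  rw [not_nonempty_iff] at h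
  simpa using P.p_sum

lemma pY_pos (y : Y) : 0 < P.pY y :=
  have := P.nonempty_left
  sum_pos (fun x _ => P.p_pos x y) univ_nonempty

lemma pXY_pos (x : X) (y : Y) : 0 < P.pXY x y := div_pos (P.p_pos x y) (P.pY_pos y)

lemma pY_mul_pXY (x : X) (y : Y) : P.pY y * P.pXY x y = P.p x y :=
  mul_div_cancel₀ _ (P.pY_pos y).ne'

def condInfo (x : X) (y : Y) : ℝ := -Real.log (P.pXY x y)

/-- `E[Z^k e^{tZ}]`, the `k`-th derivative of the moment generating function of `Z`. -/
def expMoment (k : ℕ) (t : ℝ) : ℝ :=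
  ∑ x, ∑ y, P.p x y * P.condInfo x y ^ k * Real.exp (t * P.condInfo x y)

lemma hasDerivAt_expMoment (k : ℕ) (t : ℝ) :
    HasDerivAt (P.expMoment k) (P.expMoment (k + 1) t) t := by
  unfold expMoment
  refine HasDerivAt.fun_sum fun x _ => HasDerivAt.fun_sum fun y _ => ?_
  exact ((hasDerivAt_mul_const _).exp.const_mul (P.p x y * P.condInfo x y ^ k)).congr_deriv
    (by ring)

lemma expMoment_zero_pos (t : ℝ) : 0 < P.expMoment 0 t := by
  have := P.nonempty_left
  have := P.nonempty_right
  exact sum_pos (fun x _ => sum_pos (fun y _ => by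
    simpa using mul_pos (P.p_pos x y) (Real.exp_pos _)) univ_nonempty) univ_nonempty

lemma expMoment_zero_at_zero : P.expMoment 0 0 = 1 := by
  simpa [expMoment] using P.p_sum

lemma expMoment_one_at_zero : P.expMoment 1 0 = P.condEnt := by
  simp [expMoment, condEnt, condInfo]

lemma pXY_rpow_neg (x : X) (y : Y) (t : ℝ) :
    P.pXY x y ^ (-t) = Real.exp (t * P.condInfo x y) := by
  rw [Real.rpow_def_of_pos (P.pXY_pos x y), condInfo]
  ring_nf

lemma sum_pY_mul_pXY_rpow (t : ℝ) :
    ∑ x, ∑ y, P.pY y * P.pXY x y ^ (1 - t) = P.expMoment 0 t := by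
  refine sum_congr rfl fun x _ => sum_congr rfl fun y _ => ?_
  rw [sub_eq_add_neg, Real.rpow_add (P.pXY_pos x y), Real.rpow_one, pXY_rpow_neg,
    ← mul_assoc, pY_mul_pXY, pow_zero, mul_one]

lemma tiltLogSum_eq (t : ℝ) : P.tiltLogSum t = Real.log (P.expMoment 0 t) := by
  rw [tiltLogSum, sum_pY_mul_pXY_rpow]

lemma fLam_eq (t : ℝ) (x : X) (y : Y) :
    P.fLam t x y = Real.exp (t * P.condInfo x y) / P.expMoment 0 t := by
  rw [fLam, pXY_rpow_neg, sum_pY_mul_pXY_rpow]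

lemma condEnt_add_deltaLam (t : ℝ) :
    P.condEnt + P.deltaLam t = P.expMoment 1 t / P.expMoment 0 t := by
  rw [deltaLam, add_sub_cancel, expMoment, sum_div]
  refine sum_congr rfl fun x _ => ?_
  rw [sum_div]
  refine sum_congr rfl fun y _ => ?_
  rw [fLam_eq, ← condInfo]
  ring

lemma sigmaSq_eq_sum (t : ℝ) :
    P.sigmaSq t = (∑ x, ∑ y, P.p x y * Real.exp (t * P.condInfo x y) *
      (P.condInfo x y - (P.condEnt + P.deltaLam t)) ^ 2) / P.expMoment 0 t := by
  rw [sigmaSq, sum_div]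
  refine sum_congr rfl fun x _ => ?_
  rw [sum_div]
  refine sum_congr rfl fun y _ => ?_
  rw [fLam_eq, ← mul_assoc (P.pY y), pY_mul_pXY, sq_abs, ← condInfo]
  ring

lemma sigmaSq_eq (t : ℝ) :
    P.sigmaSq t = P.expMoment 2 t / P.expMoment 0 t - (P.expMoment 1 t / P.expMoment 0 t) ^ 2 := by
  have hS := (P.expMoment_zero_pos t).ne'
  have hexpand : (∑ x, ∑ y, P.p x y * Real.exp (t * P.condInfo x y) *
      (P.condInfo x y - P.expMoment 1 t / P.expMoment 0 t) ^ 2) = P.expMoment 2 t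
        - 2 * (P.expMoment 1 t / P.expMoment 0 t) * P.expMoment 1 t
        + (P.expMoment 1 t / P.expMoment 0 t) ^ 2 * P.expMoment 0 t := by
    simp only [expMoment, mul_sum, ← sum_sub_distrib, ← sum_add_distrib]
    refine sum_congr rfl fun x _ => sum_congr rfl fun y _ => ?_
    ring
  rw [sigmaSq_eq_sum, condEnt_add_deltaLam, hexpand]
  field_simp
  ring

lemma sigmaSq_nonneg (t : ℝ) : 0 ≤ P.sigmaSq t := by
  rw [sigmaSq_eq_sum]
  refine div_nonneg (sum_nonneg fun x _ => sum_nonneg fun y _ => ?_)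
    (P.expMoment_zero_pos t).le
  have := P.p_pos x y
  positivity

lemma sigmaSq_pos_of_condInfo_ne {t : ℝ} {x₀ : X} {y₀ : Y}
    (h : P.condInfo x₀ y₀ ≠ P.condEnt + P.deltaLam t) : 0 < P.sigmaSq t := by
  have hterm x y : 0 ≤ P.p x y * Real.exp (t * P.condInfo x y) *
      (P.condInfo x y - (P.condEnt + P.deltaLam t)) ^ 2 := by
    have := P.p_pos x y
    positivity
  rw [sigmaSq_eq_sum]
  refine div_pos (sum_pos' (fun x _ => sum_nonneg fun y _ => hterm x y)
    ⟨x₀, mem_univ _, sum_pos' (fun y _ => hterm x₀ y) ⟨y₀, mem_univ _, ?_⟩⟩)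
    (P.expMoment_zero_pos t)
  have := P.p_pos x₀ y₀
  have := sub_ne_zero.mpr h
  positivity

lemma hasDerivAt_tiltLogSum (t : ℝ) :
    HasDerivAt P.tiltLogSum (P.condEnt + P.deltaLam t) t := by
  rw [funext P.tiltLogSum_eq, condEnt_add_deltaLam]
  exact (P.hasDerivAt_expMoment 0 t).log (P.expMoment_zero_pos t).ne'

lemma hasDerivAt_deltaLam (t : ℝ) : HasDerivAt P.deltaLam (P.sigmaSq t) t := by
  have hS := (P.expMoment_zero_pos t).ne'
  have hδ : P.deltaLam = fun s => P.expMoment 1 s / P.expMoment 0 s - P.condEnt :=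
    funext fun s => eq_sub_of_add_eq' (P.condEnt_add_deltaLam s)
  rw [hδ, sigmaSq_eq]
  refine (((P.hasDerivAt_expMoment 1 t).div (P.hasDerivAt_expMoment 0 t) hS).sub_const
    P.condEnt).congr_deriv ?_
  field_simp

lemma continuous_sigmaSq : Continuous P.sigmaSq := by
  have hcont k : Continuous (P.expMoment k) :=
    continuous_iff_continuousAt.2 fun t => (P.hasDerivAt_expMoment k t).continuousAt
  have hS t := (P.expMoment_zero_pos t).ne'
  rw [funext P.sigmaSq_eq]
  fun_prop (disch := exact hS _)

lemma deltaLam_zero : P.deltaLam 0 = 0 := by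
  have h := P.condEnt_add_deltaLam 0
  rw [expMoment_one_at_zero, expMoment_zero_at_zero, div_one] at h
  linarith

lemma monotone_deltaLam : Monotone P.deltaLam :=
  monotone_of_hasDerivAt_nonneg P.hasDerivAt_deltaLam P.sigmaSq_nonneg

lemma rFun_deltaLam {t : ℝ} (ht : 0 ≤ t) :
    P.rFun (P.deltaLam t) = t * (P.condEnt + P.deltaLam t) - P.tiltLogSum t := by
  refine IsGreatest.csSup_eq ⟨⟨t, ht, rfl⟩, ?_⟩
  rintro _ ⟨s, -, rfl⟩
  have := add_deriv_mul_sub_le_of_monotone P.hasDerivAt_tiltLogSum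
    (monotone_const.add P.monotone_deltaLam) t s
  dsimp only
  linarith

lemma exists_condInfo_ne (hσ : 0 < P.sigmaSq 0) (t : ℝ) :
    ∃ x y, P.condInfo x y ≠ P.condEnt + P.deltaLam t := by
  by_contra! hconst
  have hmean : P.condEnt = P.condEnt + P.deltaLam t :=
    calc P.condEnt = ∑ x, ∑ y, P.p x y * (P.condEnt + P.deltaLam t) :=
          sum_congr rfl fun x _ => sum_congr rfl fun y _ => by rw [← hconst x y]; rfl
      _ = P.condEnt + P.deltaLam t := by simp only [← sum_mul, P.p_sum, one_mul]
  have : P.sigmaSq 0 = 0 := by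
    simp [sigmaSq_eq_sum, deltaLam_zero, hconst, ← hmean]
  exact hσ.ne' this

lemma sigmaSq_pos (hσ : 0 < P.sigmaSq 0) (t : ℝ) : 0 < P.sigmaSq t :=
  have ⟨_, _, h⟩ := P.exists_condInfo_ne hσ t
  P.sigmaSq_pos_of_condInfo_ne h

lemma strictMono_deltaLam (hσ : 0 < P.sigmaSq 0) : StrictMono P.deltaLam :=
  strictMono_of_hasDerivAt_pos P.hasDerivAt_deltaLam (P.sigmaSq_pos hσ)

lemma hasDerivAt_mul_condEnt_add_deltaLam_sub_tiltLogSum (t : ℝ) :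
    HasDerivAt (fun s => s * (P.condEnt + P.deltaLam s) - P.tiltLogSum s)
      (t * P.sigmaSq t) t :=
  (((hasDerivAt_id t).mul ((P.hasDerivAt_deltaLam t).const_add P.condEnt)).sub
    (P.hasDerivAt_tiltLogSum t)).congr_deriv (by simp)

lemma hasDerivAt_rFun (hσ : 0 < P.sigmaSq 0) {t : ℝ} (ht : 0 < t) :
    HasDerivAt P.rFun t (P.deltaLam t) := by
  have hσt := (P.sigmaSq_pos hσ t).ne'
  have hδ : HasStrictDerivAt P.deltaLam (P.sigmaSq t) t :=
    hasStrictDerivAt_of_hasDerivAt_of_continuousAt (.of_forall P.hasDerivAt_deltaLam)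
      P.continuous_sigmaSq.continuousAt
  set g := hδ.localInverse P.deltaLam _ t hσt
  have hg : HasStrictDerivAt g (P.sigmaSq t)⁻¹ (P.deltaLam t) := hδ.to_localInverse hσt
  have hgt : g (P.deltaLam t) = t := (hδ.eventually_left_inverse hσt).self_of_nhds
  have hg_pos : ∀ᶠ d in 𝓝 (P.deltaLam t), 0 < g d :=
    hg.hasDerivAt.continuousAt.eventually (by rw [hgt]; exact eventually_gt_nhds ht)
  have hr : (fun s => s * (P.condEnt + P.deltaLam s) - P.tiltLogSum s) ∘ g
      =ᶠ[𝓝 (P.deltaLam t)] P.rFun := by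
    filter_upwards [hg_pos, hδ.eventually_right_inverse hσt] with d hd hδg
    rw [Function.comp_apply, ← P.rFun_deltaLam hd.le, hδg]
  have hderiv := (P.hasDerivAt_mul_condEnt_add_deltaLam_sub_tiltLogSum _).comp
    (P.deltaLam t) hg.hasDerivAt
  rw [hgt, mul_assoc, mul_inv_cancel₀ hσt, mul_one] at hderiv
  exact hderiv.congr_of_eventuallyEq hr.symm

lemma exists_pos_deltaLam_eq (hσ : 0 < P.sigmaSq 0) {Δstar d : ℝ}
    (hΔ : Tendsto P.deltaLam atTop (𝓝 Δstar)) (hd : d ∈ Set.Ioo 0 Δstar) :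
    ∃ t, 0 < t ∧ P.deltaLam t = d := by
  obtain ⟨T, hT⟩ := (hΔ.eventually (eventually_gt_nhds hd.2)).exists
  obtain ⟨t, rfl⟩ := intermediate_value_univ 0 T
    (continuous_iff_continuousAt.2 fun s => (P.hasDerivAt_deltaLam s).continuousAt)
    ⟨by rw [P.deltaLam_zero]; exact hd.1.le, hT.le⟩
  exact ⟨t, (P.strictMono_deltaLam hσ).lt_iff_lt.1 (by rw [P.deltaLam_zero]; exact hd.1), rfl⟩

section rateFunction

variable {P} (hσ : 0 < P.sigmaSq 0) {Δstar : ℝ}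
  (hΔ : Tendsto P.deltaLam atTop (𝓝 Δstar))
include hσ hΔ

lemma differentiableOn_rFun : DifferentiableOn ℝ P.rFun (Set.Ioo 0 Δstar) := by
  intro d hd
  obtain ⟨t, ht, rfl⟩ := P.exists_pos_deltaLam_eq hσ hΔ hd
  exact (P.hasDerivAt_rFun hσ ht).differentiableAt.differentiableWithinAt

lemma strictMonoOn_rFun : StrictMonoOn P.rFun (Set.Ioo 0 Δstar) := by
  refine strictMonoOn_of_deriv_pos (convex_Ioo 0 Δstar)
    (differentiableOn_rFun hσ hΔ).continuousOn fun d hd => ?_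
  rw [interior_Ioo] at hd
  obtain ⟨t, ht, rfl⟩ := P.exists_pos_deltaLam_eq hσ hΔ hd
  rwa [(P.hasDerivAt_rFun hσ ht).deriv]

lemma convexOn_rFun : ConvexOn ℝ (Set.Ioo 0 Δstar) P.rFun := by
  refine MonotoneOn.convexOn_of_deriv (convex_Ioo 0 Δstar)
    (differentiableOn_rFun hσ hΔ).continuousOn
    (by rw [interior_Ioo]; exact differentiableOn_rFun hσ hΔ) ?_
  rw [interior_Ioo]
  intro d hd d' hd' hdd'
  obtain ⟨t, ht, rfl⟩ := P.exists_pos_deltaLam_eq hσ hΔ hd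
  obtain ⟨t', ht', rfl⟩ := P.exists_pos_deltaLam_eq hσ hΔ hd'
  rw [(P.hasDerivAt_rFun hσ ht).deriv, (P.hasDerivAt_rFun hσ ht').deriv]
  exact (P.strictMono_deltaLam hσ).le_iff_le.1 hdd'

end rateFunction

end JointPMF

/-- properties of the rate function `r`: assuming `σ²(0) > 0`,
(i) `δ(0) = 0` and `λ ↦ δ(λ)` is strictly increasing on `[0,∞)`;
(ii) for every `λ ≥ 0`, `r(δ(λ)) = λ(H(X|Y)+δ(λ)) - ln sum_{x,y} p(y) p(x|y)^{1-λ}`;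
(iii) with `Δ* = lim_{λ→∞} δ(λ)`, the function `r` is convex and strictly increasing
on `(0,Δ*)` and differentiable there with `r'(δ(λ)) = λ` for every `λ > 0` with
`δ(λ) < Δ*`. -/
theorem rFun_properties {X Y : Type} [Fintype X] [Fintype Y] (P : JointPMF X Y)
    (hσ : 0 < P.sigmaSq 0) :
    P.deltaLam 0 = 0 ∧
    StrictMonoOn P.deltaLam (Set.Ici 0) ∧
    (∀ lam : ℝ, 0 ≤ lam →
      P.rFun (P.deltaLam lam) =
        lam * (P.condEnt + P.deltaLam lam) - P.tiltLogSum lam) ∧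
    ∀ Δstar : ℝ, Filter.Tendsto P.deltaLam Filter.atTop (nhds Δstar) →
      ConvexOn ℝ (Set.Ioo 0 Δstar) P.rFun ∧
      StrictMonoOn P.rFun (Set.Ioo 0 Δstar) ∧
      ∀ lam : ℝ, 0 < lam → P.deltaLam lam < Δstar →
        HasDerivAt P.rFun lam (P.deltaLam lam) :=
  ⟨P.deltaLam_zero, (P.strictMono_deltaLam hσ).strictMonoOn _,
    fun _ hlam => P.rFun_deltaLam hlam,
    fun _ hΔ => ⟨JointPMF.convexOn_rFun hσ hΔ, JointPMF.strictMonoOn_rFun hσ hΔ,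
      fun _ hlam _ => P.hasDerivAt_rFun hσ hlam⟩⟩
end
end

section
/- (NEP with respect to relative entropy, Chernoff part) Let t be a type on X with T^n_t nonempty, fix x^n in T^n_t, and let Y_1,...,Y_n be independent with Y_i distributed according to p(.|x_i). Then for every delta >= 0: Pr{ (1/n) sum_{i=1}^n ln( p(Y_i|x_i)/q_t(Y_i) ) <= I(t;P) - delta } <= e^{-n r_-(t,delta)}, where r_-(t,delta) = sup_{lambda>=0} [ lambda ( delta - I(t;P) ) - sum_a t(a) ln sum_y p(y|a) ( p(y|a)/q_t(y) )^{-lambda} ] (inner sums over y with p(y|a) > 0). -/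
open scoped Classical BigOperators
open Finset

noncomputable section

/-- A discrete memoryless channel with finite input alphabet `X` and finite output
alphabet `Y`: transition probabilities `p x y = p(y|x)` with rows summing to one. -/
structure DIMC (X Y : Type) [Fintype X] [Fintype Y] where
  p : X → Y → ℝ
  p_nonneg : ∀ x y, 0 ≤ p x y
  p_sum : ∀ x, ∑ y, p x y = 1

/-- `t` is a type (an empirical distribution with denominator `n`) on `X`. -/
def IsType {X : Type} [Fintype X] (n : ℕ) (t : X → ℝ) : Prop :=
  (∀ x, 0 ≤ t x) ∧ (∑ x, t x = 1) ∧ ∀ x, ∃ m : ℕ, t x * n = m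

/-- `T^n_t`: the set of sequences of length `n` with empirical distribution `t`. -/
def typeClass {X : Type} [Fintype X] (n : ℕ) (t : X → ℝ) : Finset (Fin n → X) :=
  Finset.univ.filter fun xv =>
    ∀ x, ((Finset.univ.filter fun i => xv i = x).card : ℝ) = (n : ℝ) * t x

/-- Entropy `H(t)` of a distribution on `X` (in nats). -/
def typeEnt {X : Type} [Fintype X] (t : X → ℝ) : ℝ := -∑ x, t x * Real.log (t x)

namespace DIMC

variable {X Y : Type} [Fintype X] [Fintype Y] (W : DIMC X Y)

/-- Output distribution `q_t` induced by input distribution `t`. -/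
def qOut (t : X → ℝ) (y : Y) : ℝ := ∑ x, t x * W.p x y

/-- Mutual information `I(t;P)` (with the convention `0 ln 0 = 0`). -/
def mutInfo (t : X → ℝ) : ℝ :=
  ∑ x, t x * ∑ y, W.p x y * Real.log (W.p x y / W.qOut t y)

/-- The DIMC jar based on type `t`. -/
def dJar (n : ℕ) (t : X → ℝ) (δ : ℝ) (yv : Fin n → Y) : Finset (Fin n → X) :=
  (typeClass n t).filter fun xv =>
    0 < (∏ i, W.p (xv i) (yv i)) ∧
      -(1 / (n : ℝ)) * ∑ i, Real.log (W.p (xv i) (yv i) / W.qOut t (yv i)) <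
        -W.mutInfo t + δ

/-- `P_{t,δ}`, expressed as a function of the transmitted sequence `xv` (it depends on
`xv` only through its type `t`). -/
def Ptd (n : ℕ) (t : X → ℝ) (δ : ℝ) (xv : Fin n → X) : ℝ :=
  ∑ yv : Fin n → Y,
    (∏ i, W.p (xv i) (yv i)) *
      (if -W.mutInfo t + δ ≤
          -(1 / (n : ℝ)) * ∑ i, Real.log (W.p (xv i) (yv i) / W.qOut t (yv i))
        then 1 else 0)

/-- Jar-decoding error probability for the Shannon random code ensemble with fixed
codeword type `t`: the `2^k` codewords are i.i.d. uniform on `T^n_t`, the message is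
uniform, and the channel acts memorylessly. -/
def PerrT (n k : ℕ) (t : X → ℝ) (δ : ℝ) : ℝ :=
  ∑ cb : Fin (2 ^ k) → Fin n → X, ∑ q : Fin (2 ^ k), ∑ yv : Fin n → Y,
    (∏ j, if cb j ∈ typeClass n t then 1 / ((typeClass n t).card : ℝ) else 0) *
      ((1 / (2 ^ k : ℝ)) *
        ((∏ i, W.p (cb q i) (yv i)) *
          (if cb q ∉ W.dJar n t δ yv ∨ ∃ j, cb j ≠ cb q ∧ cb j ∈ W.dJar n t δ yv
            then 1 else 0)))

end DIMC

namespace DIMC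

variable {X Y : Type} [Fintype X] [Fintype Y] (W : DIMC X Y)

/-- The outputs with positive probability given input `x`. -/
def suppY (x : X) : Finset Y := Finset.univ.filter fun y => 0 < W.p x y

/-- `sum_a t(a) ln sum_y p(y|a) (p(y|a)/q_t(y))^{-λ}` (inner sums over `y` with
`p(y|a) > 0`). -/
def tiltLogMinus (t : X → ℝ) (lam : ℝ) : ℝ :=
  ∑ a, t a * Real.log (∑ y ∈ W.suppY a, W.p a y * (W.p a y / W.qOut t y) ^ (-lam))

/-- The rate function `r_-(t,δ)`. -/
def rMinus (t : X → ℝ) (δ : ℝ) : ℝ :=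
  sSup ((fun lam => lam * (δ - W.mutInfo t) - W.tiltLogMinus t lam) '' Set.Ici 0)

/-- The tilting factor `f_{-λ,t}(y|x)`. -/
def fMinus (t : X → ℝ) (lam : ℝ) (x : X) (y : Y) : ℝ :=
  (W.p x y / W.qOut t y) ^ (-lam) /
    ∑ v ∈ W.suppY x, W.p x v * (W.p x v / W.qOut t v) ^ (-lam)

/-- `D(t,x,λ)`. -/
def Dtilt (t : X → ℝ) (x : X) (lam : ℝ) : ℝ :=
  ∑ y ∈ W.suppY x, W.p x y * (W.fMinus t lam x y * Real.log (W.p x y / W.qOut t y))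

/-- `δ_-(t,λ) = I(t;P) - sum_x t(x) D(t,x,λ)`. -/
def deltaMinus (t : X → ℝ) (lam : ℝ) : ℝ :=
  W.mutInfo t - ∑ x, t x * W.Dtilt t x lam

/-- `σ²_{D,-}(t;P,λ)`. -/
def sigmaSqMinus (t : X → ℝ) (lam : ℝ) : ℝ :=
  ∑ x, t x * ∑ y ∈ W.suppY x,
    W.p x y * (W.fMinus t lam x y *
      |Real.log (W.p x y / W.qOut t y) - W.Dtilt t x lam| ^ 2)

/-- `M_{D,-}(t;P,λ)`. -/
def MMinus (t : X → ℝ) (lam : ℝ) : ℝ :=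
  ∑ x, t x * ∑ y ∈ W.suppY x,
    W.p x y * (W.fMinus t lam x y *
      |Real.log (W.p x y / W.qOut t y) - W.Dtilt t x lam| ^ 3)

/-- `ξ̄_{D,-}(t;P,λ,n)` with the Berry-Esseen constant `C = 0.56`. -/
def xiBarMinus (t : X → ℝ) (lam : ℝ) (n : ℕ) : ℝ :=
  2 * 0.56 * W.MMinus t lam / (Real.sqrt n * Real.sqrt (W.sigmaSqMinus t lam) ^ 3) +
    Real.exp ((n : ℝ) * lam ^ 2 * W.sigmaSqMinus t lam / 2) *
      (gaussQ (Real.sqrt n * lam * Real.sqrt (W.sigmaSqMinus t lam)) -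
        gaussQ
          (gaussQinv
              (0.56 * W.MMinus t lam /
                (Real.sqrt n * Real.sqrt (W.sigmaSqMinus t lam) ^ 3)) +
            Real.sqrt n * lam * Real.sqrt (W.sigmaSqMinus t lam)))

/-- `ξ̲_{D,-}(t;P,λ,n)` with the Berry-Esseen constant `C = 0.56`. -/
def xiUnderMinus (t : X → ℝ) (lam : ℝ) (n : ℕ) : ℝ :=
  Real.exp ((n : ℝ) * lam ^ 2 * W.sigmaSqMinus t lam / 2) *
    gaussQ
      (gaussQinv
          (1 / 2 - 2 * 0.56 * W.MMinus t lam /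
            (Real.sqrt n * Real.sqrt (W.sigmaSqMinus t lam) ^ 3)) +
        Real.sqrt n * lam * Real.sqrt (W.sigmaSqMinus t lam))

/-- The probability (over the channel outputs `Y_1, ..., Y_n`, independent with
`Y_i ~ p(.|x_i)`) that `(1/n) sum_i ln(p(Y_i|x_i)/q_t(Y_i)) <= I(t;P) - δ`. -/
def relTail (n : ℕ) (t : X → ℝ) (δ : ℝ) (xv : Fin n → X) : ℝ :=
  ∑ yv : Fin n → Y,
    (∏ i, W.p (xv i) (yv i)) *
      (if (1 / (n : ℝ)) * ∑ i, Real.log (W.p (xv i) (yv i) / W.qOut t (yv i)) ≤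
          W.mutInfo t - δ
        then 1 else 0)

/-- `D(t,x)`. -/
def Dx (t : X → ℝ) (x : X) : ℝ :=
  ∑ y ∈ W.suppY x, W.p x y * Real.log (W.p x y / W.qOut t y)

/-- The conditional divergence variance `σ²_D(t;P)`. -/
def sigmaSqD (t : X → ℝ) : ℝ :=
  ∑ x, t x *
    ((∑ y ∈ W.suppY x, W.p x y * Real.log (W.p x y / W.qOut t y) ^ 2) - W.Dx t x ^ 2)

/-- The conditional divergence third absolute moment `M_D(t;P)`. -/
def MD (t : X → ℝ) : ℝ :=
  ∑ x, t x * ∑ y ∈ W.suppY x,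
    W.p x y * |Real.log (W.p x y / W.qOut t y) - W.Dx t x| ^ 3

end DIMC

/-!
Chernoff bound. For each `λ ≥ 0`, Markov's inequality applied to
`exp (-λ ∑ ln (p(Yᵢ|xᵢ)/q_t(Yᵢ)))` bounds the tail by `e^{nλ(I - δ)}` times the moment
generating function, which factorises over the independent letters; grouping the letters by
input symbol (there are `n t(a)` copies of `a`) turns the product into
`exp (n ∑ₐ t(a) ln ∑_y p(y|a) (p(y|a)/q_t(y))^{-λ})`. Optimising over `λ` gives `r_-(t,δ)`.
-/

open Real

lemma ite_le_le_exp_mul_sub {a b lam : ℝ} (hlam : 0 ≤ lam) :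
    (if a ≤ b then 1 else 0 : ℝ) ≤ exp (lam * (b - a)) := by
  split_ifs with hab
  · exact one_le_exp (mul_nonneg hlam (sub_nonneg.mpr hab))
  · exact (exp_pos _).le

lemma le_exp_neg_mul_sSup {a c : ℝ} {S : Set ℝ} (hc : 0 < c) (hS : S.Nonempty)
    (h : ∀ s ∈ S, a ≤ exp (-c * s)) : a ≤ exp (-c * sSup S) := by
  rcases le_or_gt a 0 with ha | ha
  · exact ha.trans (exp_pos _).le
  -- Each bound `a ≤ exp (-c s)` says `s ≤ -log a / c`, so `S` is bounded above.
  have hbound : sSup S ≤ -log a / c := csSup_le hS fun s hs => by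
    rw [le_div_iff₀ hc]
    linarith [(log_le_iff_le_exp ha).mpr (h s hs)]
  rw [← log_le_iff_le_exp ha]
  linarith [(le_div_iff₀ hc).mp hbound]

section typeClass

variable {X : Type} [Fintype X] {n : ℕ} {t : X → ℝ} {xv : Fin n → X}

lemma sum_comp_eq_of_mem_typeClass (hxv : xv ∈ typeClass n t) (G : X → ℝ) :
    ∑ i, G (xv i) = n * ∑ x, t x * G x := by
  rw [← Finset.sum_fiberwise univ xv, Finset.mul_sum]
  refine Finset.sum_congr rfl fun x _ => ?_
  rw [Finset.sum_congr rfl fun i hi => by rw [(Finset.mem_filter.mp hi).2],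
    Finset.sum_const, nsmul_eq_mul, (Finset.mem_filter.mp hxv).2 x, mul_assoc]

lemma nonneg_of_mem_typeClass (hn : 0 < n) (hxv : xv ∈ typeClass n t) (x : X) :
    0 ≤ t x := by
  have hcount := (Finset.mem_filter.mp hxv).2 x
  have hn' : (0 : ℝ) < n := by exact_mod_cast hn
  exact nonneg_of_mul_nonneg_right (hcount ▸ Nat.cast_nonneg _) hn'

lemma pos_of_mem_typeClass (hxv : xv ∈ typeClass n t) (i : Fin n) : 0 < t (xv i) := by
  have hcount := (Finset.mem_filter.mp hxv).2 (xv i)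
  have hpos : (0 : ℝ) < (univ.filter fun j => xv j = xv i).card :=
    Nat.cast_pos.mpr (Finset.card_pos.mpr ⟨i, by simp⟩)
  exact pos_of_mul_pos_right (hcount ▸ hpos) (Nat.cast_nonneg n)

end typeClass

namespace DIMC

variable {X Y : Type} [Fintype X] [Fintype Y] (W : DIMC X Y)

lemma exists_p_pos (x : X) : ∃ y, 0 < W.p x y := by
  by_contra! h
  have h0 : ∑ y, W.p x y = 0 :=
    Finset.sum_eq_zero fun y _ => le_antisymm (h y) (W.p_nonneg x y)
  simp [W.p_sum] at h0

lemma qOut_pos {t : X → ℝ} (ht : ∀ x, 0 ≤ t x) {x : X} {y : Y} (hx : 0 < t x)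
    (hp : 0 < W.p x y) : 0 < W.qOut t y :=
  (mul_pos hx hp).trans_le <|
    Finset.single_le_sum (fun x' _ => mul_nonneg (ht x') (W.p_nonneg x' y)) (mem_univ x)

variable {t : X → ℝ} {x : X}

lemma sum_mul_exp_neg_mul_log_eq (hq : ∀ y, 0 < W.p x y → 0 < W.qOut t y) (lam : ℝ) :
    ∑ y, W.p x y * exp (-lam * log (W.p x y / W.qOut t y)) =
      ∑ y ∈ W.suppY x, W.p x y * (W.p x y / W.qOut t y) ^ (-lam) := by
  rw [← Finset.sum_subset (Finset.subset_univ (W.suppY x))]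
  · refine Finset.sum_congr rfl fun y hy => ?_
    have hp : 0 < W.p x y := (Finset.mem_filter.mp hy).2
    rw [rpow_def_of_pos (div_pos hp (hq y hp)), mul_comm (log _)]
  · intro y _ hy
    have hp : W.p x y = 0 :=
      le_antisymm (not_lt.mp fun h => hy (by simp [suppY, h])) (W.p_nonneg x y)
    simp [hp]

lemma sum_suppY_mul_rpow_pos (hq : ∀ y, 0 < W.p x y → 0 < W.qOut t y) (lam : ℝ) :
    0 < ∑ y ∈ W.suppY x, W.p x y * (W.p x y / W.qOut t y) ^ (-lam) := by
  obtain ⟨y₀, hy₀⟩ := W.exists_p_pos x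
  refine Finset.sum_pos (fun y hy => ?_) ⟨y₀, by simp [suppY, hy₀]⟩
  have hp : 0 < W.p x y := (Finset.mem_filter.mp hy).2
  exact mul_pos hp (rpow_pos_of_pos (div_pos hp (hq y hp)) _)

variable {n : ℕ} {xv : Fin n → X}

lemma relTail_le_exp_mul_prod (hn : 0 < n) (δ : ℝ) {lam : ℝ} (hlam : 0 ≤ lam) :
    W.relTail n t δ xv ≤ exp (n * lam * (W.mutInfo t - δ)) *
      ∏ i, ∑ y, W.p (xv i) y * exp (-lam * log (W.p (xv i) y / W.qOut t y)) := by
  have hn' : (n : ℝ) ≠ 0 := by exact_mod_cast hn.ne'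
  set r : Fin n → Y → ℝ := fun i y => log (W.p (xv i) y / W.qOut t y)
  have hexp : ∀ yv : Fin n → Y,
      exp (n * lam * ((W.mutInfo t - δ) - 1 / n * ∑ i, r i (yv i))) =
        exp (n * lam * (W.mutInfo t - δ)) * ∏ i, exp (-lam * r i (yv i)) := by
    intro yv
    rw [← exp_sum, ← exp_add, ← Finset.mul_sum]
    congr 1
    field_simp
    ring
  calc W.relTail n t δ xv
      ≤ ∑ yv : Fin n → Y, (∏ i, W.p (xv i) (yv i)) *
          exp (n * lam * ((W.mutInfo t - δ) - 1 / n * ∑ i, r i (yv i))) :=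
        Finset.sum_le_sum fun yv _ => mul_le_mul_of_nonneg_left
          (ite_le_le_exp_mul_sub (by positivity))
          (Finset.prod_nonneg fun i _ => W.p_nonneg _ _)
    _ = exp (n * lam * (W.mutInfo t - δ)) *
          ∑ yv : Fin n → Y, ∏ i, W.p (xv i) (yv i) * exp (-lam * r i (yv i)) := by
        rw [Finset.mul_sum]
        exact Finset.sum_congr rfl fun yv _ => by rw [hexp, Finset.prod_mul_distrib]; ring
    _ = _ := by rw [Fintype.prod_sum]

lemma relTail_le_exp (hn : 0 < n) (hxv : xv ∈ typeClass n t) (δ : ℝ) {lam : ℝ}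
    (hlam : 0 ≤ lam) :
    W.relTail n t δ xv ≤
      exp (-(n : ℝ) * (lam * (δ - W.mutInfo t) - W.tiltLogMinus t lam)) := by
  have hq : ∀ i y, 0 < W.p (xv i) y → 0 < W.qOut t y := fun i _ =>
    W.qOut_pos (nonneg_of_mem_typeClass hn hxv) (pos_of_mem_typeClass hxv i)
  have hprod : ∏ i, ∑ y, W.p (xv i) y * exp (-lam * log (W.p (xv i) y / W.qOut t y)) =
      exp (n * W.tiltLogMinus t lam) := by
    rw [tiltLogMinus, ← sum_comp_eq_of_mem_typeClass hxv, exp_sum]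
    refine Finset.prod_congr rfl fun i _ => ?_
    rw [W.sum_mul_exp_neg_mul_log_eq (hq i), exp_log (W.sum_suppY_mul_rpow_pos (hq i) lam)]
  calc W.relTail n t δ xv
      ≤ exp (n * lam * (W.mutInfo t - δ)) * exp (n * W.tiltLogMinus t lam) :=
        hprod ▸ W.relTail_le_exp_mul_prod hn δ hlam
    _ = _ := by rw [← exp_add]; congr 1; ring

end DIMC

theorem nep_relEnt_chernoff_general {X Y : Type} [Fintype X] [Fintype Y] (W : DIMC X Y)
    (n : ℕ) (hn : 0 < n) (t : X → ℝ)
    (xv : Fin n → X) (hxv : xv ∈ typeClass n t) (δ : ℝ) :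
    W.relTail n t δ xv ≤ Real.exp (-(n : ℝ) * W.rMinus t δ) := by
  refine le_exp_neg_mul_sSup (Nat.cast_pos.mpr hn) ⟨_, 0, Set.self_mem_Ici, rfl⟩ ?_
  rintro _ ⟨lam, hlam, rfl⟩
  exact W.relTail_le_exp hn hxv δ hlam

/-- NEP w.r.t. relative entropy, Chernoff part: for a type `t`, a
sequence `x^n ∈ T^n_t`, and independent outputs `Y_i ~ p(.|x_i)`, for every `δ ≥ 0`,
`Pr{ (1/n) sum_i ln(p(Y_i|x_i)/q_t(Y_i)) ≤ I(t;P) - δ } ≤ e^{-n r_-(t,δ)}`. -/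
theorem nep_relEnt_chernoff {X Y : Type} [Fintype X] [Fintype Y] (W : DIMC X Y)
    (n : ℕ) (hn : 0 < n) (t : X → ℝ) (ht : IsType n t)
    (xv : Fin n → X) (hxv : xv ∈ typeClass n t) (δ : ℝ) (hδ : 0 ≤ δ) :
    W.relTail n t δ xv ≤ Real.exp (-(n : ℝ) * W.rMinus t δ) :=
  nep_relEnt_chernoff_general W n hn t xv hxv δ
end
end
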